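/- Fix 1 ≤ j ≤ k with n_j even and positive, let e ≥ 1 be an integer, and let I be the ideal of R generated by x_{0,j}, x_{1,j}, …, x_{n_j/2 − 1, j}. Then Δ_j^i(x_{0,j}^e) ∈ I for every integer i with 0 ≤ i < e·n_j/2. -/
import Mathlib


open MvPolynomial Finset

variable (𝕜 : Type) [Field 𝕜] [CharZero 𝕜] (k : ℕ) (n : Fin k → ℕ)

/- STATEMENT 10: for `n_j` even and positive, `Δ_j^i(x_{0,j}^e)` lies in the ideal
`I = (x_{0,j}, …, x_{n_j/2 - 1, j})` whenever `i < e·n_j/2`. -/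

/-- The variable `x_{i,j}` (as `X ⟨j,i⟩`), or `0` if `i` is out of range. -/
noncomputable def Xv (j : Fin k) (i : ℕ) : MvPolynomial (Σ j : Fin k, Fin (n j + 1)) 𝕜 :=
  if h : i ≤ n j then MvPolynomial.X ⟨j, ⟨i, Nat.lt_succ_of_le h⟩⟩ else 0

/-- The derivation `Δ_j` with `Δ_j x_{i,j} = (n_j - i)(i+1) x_{i+1,j}`. -/
noncomputable def Δw (j : Fin k) : Derivation 𝕜 (MvPolynomial (Σ j : Fin k, Fin (n j + 1)) 𝕜)
    (MvPolynomial (Σ j : Fin k, Fin (n j + 1)) 𝕜) :=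
  mkDerivation 𝕜 fun v =>
    if v.1 = j then C ((((n v.1 - (v.2 : ℕ)) * ((v.2 : ℕ) + 1) : ℕ)) : 𝕜) * Xv 𝕜 k n v.1 ((v.2 : ℕ) + 1)
    else 0

/-- Weight of a variable: `n j / 2 - i` for `x_{i,j}`, `0` otherwise. -/
def wt (j : Fin k) (v : Σ j : Fin k, Fin (n j + 1)) : ℕ :=
  if v.1 = j then n j / 2 - (v.2 : ℕ) else 0

/-- Weight of a monomial exponent vector. -/
def Wt (j : Fin k) (m : (Σ j : Fin k, Fin (n j + 1)) →₀ ℕ) : ℕ :=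
  m.sum fun v c => c * wt k n j v

/-- The `𝕜`-span of monomials of weight at least `t`. -/
noncomputable def Sw (j : Fin k) (t : ℕ) :
    Submodule 𝕜 (MvPolynomial (Σ j : Fin k, Fin (n j + 1)) 𝕜) :=
  Submodule.span 𝕜 {p | ∃ m, t ≤ Wt k n j m ∧ p = monomial m 1}

variable {𝕜 k n}
variable {j : Fin k}

lemma Wt_add (m m' : (Σ j : Fin k, Fin (n j + 1)) →₀ ℕ) :
    Wt k n j (m + m') = Wt k n j m + Wt k n j m' :=
  Finsupp.sum_add_index' (fun _ => zero_mul _) (fun _ b₁ b₂ => add_mul b₁ b₂ _)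

lemma Wt_single (v : Σ j : Fin k, Fin (n j + 1)) (c : ℕ) :
    Wt k n j (Finsupp.single v c) = c * wt k n j v :=
  Finsupp.sum_single_index (zero_mul _)

lemma monomial_mem_Sw {t : ℕ} {m : (Σ j : Fin k, Fin (n j + 1)) →₀ ℕ} (c : 𝕜)
    (h : t ≤ Wt k n j m) : monomial m c ∈ Sw 𝕜 k n j t := by
  have : (monomial m c : MvPolynomial _ 𝕜) = c • monomial m 1 := by
    rw [smul_monomial, smul_eq_mul, mul_one]
  rw [this]
  exact Submodule.smul_mem _ _ (Submodule.subset_span ⟨m, h, rfl⟩)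

lemma Sw_mono {t t' : ℕ} (h : t' ≤ t) : Sw 𝕜 k n j t ≤ Sw 𝕜 k n j t' :=
  Submodule.span_mono fun p ⟨m, hm, hp⟩ => ⟨m, le_trans h hm, hp⟩

lemma monomial_mul_mem_Sw {b : ℕ} (m : (Σ j : Fin k, Fin (n j + 1)) →₀ ℕ) (c : 𝕜)
    {q : MvPolynomial (Σ j : Fin k, Fin (n j + 1)) 𝕜} (hq : q ∈ Sw 𝕜 k n j b) :
    monomial m c * q ∈ Sw 𝕜 k n j (Wt k n j m + b) := by
  induction hq using Submodule.span_induction with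
  | mem p hp =>
    obtain ⟨m', hm', rfl⟩ := hp
    rw [monomial_mul]
    exact monomial_mem_Sw _ (by rw [Wt_add]; omega)
  | zero => rw [mul_zero]; exact Submodule.zero_mem _
  | add x y _ _ hx hy => rw [mul_add]; exact Submodule.add_mem _ hx hy
  | smul a x _ hx => rw [mul_smul_comm]; exact Submodule.smul_mem _ _ hx

lemma f_mem_Sw (v : Σ j : Fin k, Fin (n j + 1)) :
    (if v.1 = j then C ((((n v.1 - (v.2 : ℕ)) * ((v.2 : ℕ) + 1) : ℕ)) : 𝕜) *
        Xv 𝕜 k n v.1 ((v.2 : ℕ) + 1) else 0) ∈ Sw 𝕜 k n j (wt k n j v - 1) := by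
  obtain ⟨j', i⟩ := v
  by_cases h : j' = j
  · subst h
    rw [if_pos rfl, Xv]
    by_cases h2 : (i : ℕ) + 1 ≤ n j'
    · rw [dif_pos h2]
      rw [← smul_eq_C_mul]
      have hmem : (monomial (Finsupp.single
            (⟨j', ⟨(i : ℕ) + 1, Nat.lt_succ_of_le h2⟩⟩ : Σ j : Fin k, Fin (n j + 1)) 1) (1 : 𝕜))
          ∈ Sw 𝕜 k n j' (wt k n j' ⟨j', i⟩ - 1) := by
        apply monomial_mem_Sw
        rw [Wt_single, one_mul]
        simp only [wt, eq_self_iff_true, if_true]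
        omega
      exact Submodule.smul_mem _ _ hmem
    · rw [dif_neg h2, mul_zero]
      exact Submodule.zero_mem _
  · rw [if_neg h]
    exact Submodule.zero_mem _

lemma delta_monomial_mem (m : (Σ j : Fin k, Fin (n j + 1)) →₀ ℕ) (c : 𝕜) :
    Δw 𝕜 k n j (monomial m c) ∈ Sw 𝕜 k n j (Wt k n j m - 1) := by
  rw [Δw, mkDerivation_monomial]
  apply Submodule.smul_mem
  apply Submodule.sum_mem
  intro v hv
  simp only [smul_eq_mul]
  have hmv : m v ≠ 0 := Finsupp.mem_support_iff.mp hv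
  have hdec : (m - Finsupp.single v 1) + Finsupp.single v 1 = m := by
    ext u
    rcases eq_or_ne u v with rfl | hne
    · simp only [Finsupp.add_apply, Finsupp.tsub_apply, Finsupp.single_eq_same]
      omega
    · simp [Finsupp.single_apply, hne.symm, Finsupp.single_eq_of_ne (Ne.symm hne)]
  have hW : Wt k n j m = Wt k n j (m - Finsupp.single v 1) + wt k n j v := by
    conv_lhs => rw [← hdec]
    rw [Wt_add, Wt_single, one_mul]
  refine Sw_mono ?_ (monomial_mul_mem_Sw (m - Finsupp.single v 1) _ (f_mem_Sw v))
  omega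

lemma delta_mem {t : ℕ} {p : MvPolynomial (Σ j : Fin k, Fin (n j + 1)) 𝕜}
    (hp : p ∈ Sw 𝕜 k n j t) : Δw 𝕜 k n j p ∈ Sw 𝕜 k n j (t - 1) := by
  induction hp using Submodule.span_induction with
  | mem p hp =>
    obtain ⟨m, hm, rfl⟩ := hp
    exact Sw_mono (by omega) (delta_monomial_mem m 1)
  | zero => rw [map_zero]; exact Submodule.zero_mem _
  | add x y _ _ hx hy => rw [map_add]; exact Submodule.add_mem _ hx hy
  | smul a x _ hx => rw [Derivation.map_smul]; exact Submodule.smul_mem _ _ hx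

lemma delta_iter_mem {t : ℕ} (i : ℕ) {p : MvPolynomial (Σ j : Fin k, Fin (n j + 1)) 𝕜}
    (hp : p ∈ Sw 𝕜 k n j t) : (⇑(Δw 𝕜 k n j))^[i] p ∈ Sw 𝕜 k n j (t - i) := by
  induction i generalizing p t with
  | zero => simpa using hp
  | succ i ih =>
    rw [Function.iterate_succ_apply']
    exact Sw_mono (by omega) (delta_mem (ih hp))

theorem delta_iter_mem_ideal (𝕜 : Type) [Field 𝕜] [CharZero 𝕜] (k : ℕ) (hk : 1 ≤ k)
    (n : Fin k → ℕ) (j : Fin k) (hpos : 0 < n j) (heven : Even (n j))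
    (e : ℕ) (he : 1 ≤ e) (i : ℕ) (hi : i < e * (n j / 2)) :
    (⇑(Δw 𝕜 k n j))^[i] (Xv 𝕜 k n j 0 ^ e) ∈
      Ideal.span {p : MvPolynomial (Σ j : Fin k, Fin (n j + 1)) 𝕜 |
        ∃ v : Σ j : Fin k, Fin (n j + 1), v.1 = j ∧ (v.2 : ℕ) < n j / 2 ∧ p = X v} := by
  -- rewrite the generating set as an image of `X`
  have hset : {p : MvPolynomial (Σ j : Fin k, Fin (n j + 1)) 𝕜 |
      ∃ v : Σ j : Fin k, Fin (n j + 1), v.1 = j ∧ (v.2 : ℕ) < n j / 2 ∧ p = X v}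
      = X '' {v : Σ j : Fin k, Fin (n j + 1) | v.1 = j ∧ (v.2 : ℕ) < n j / 2} := by
    ext p
    constructor
    · rintro ⟨v, h1, h2, rfl⟩; exact ⟨v, ⟨h1, h2⟩, rfl⟩
    · rintro ⟨v, ⟨h1, h2⟩, rfl⟩; exact ⟨v, h1, h2, rfl⟩
  rw [hset]
  -- the starting power lies in `Sw (e * (n j / 2))`
  have h0 : (0 : ℕ) ≤ n j := Nat.zero_le _
  have hx : Xv 𝕜 k n j 0 ^ e ∈ Sw 𝕜 k n j (e * (n j / 2)) := by
    rw [Xv, dif_pos h0, X_pow_eq_monomial]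
    apply monomial_mem_Sw
    rw [Wt_single]
    simp only [wt, eq_self_iff_true, if_true, Nat.sub_zero]
    omega
  have hiter := delta_iter_mem i hx
  -- every element of `Sw t` with `t ≥ 1` lies in the ideal
  have hle : Sw 𝕜 k n j (e * (n j / 2) - i) ≤
      (Ideal.span ((X '' {v : Σ j : Fin k, Fin (n j + 1) | v.1 = j ∧ (v.2 : ℕ) < n j / 2})
        : Set (MvPolynomial (Σ j : Fin k, Fin (n j + 1)) 𝕜))).restrictScalars 𝕜 := by
    apply Submodule.span_le.2
    rintro p ⟨m, hm, rfl⟩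
    have ht : 1 ≤ Wt k n j m := le_trans (by omega) hm
    refine mem_ideal_span_X_image.mpr ?_
    intro m' hm'
    classical
    have hms : m' = m := by
      rw [support_monomial, if_neg one_ne_zero] at hm'
      exact Finset.mem_singleton.mp hm'
    subst hms
    by_contra hc
    push_neg at hc
    have hzero : Wt k n j m' = 0 := by
      rw [Wt, Finsupp.sum]
      apply Finset.sum_eq_zero
      intro v hv
      have hv' : m' v ≠ 0 := Finsupp.mem_support_iff.mp hv
      have hw : wt k n j v = 0 := by
        rw [wt]
        by_cases h : v.1 = j
        · have hns : ¬ ((v.2 : ℕ) < n j / 2) := fun hlt => hv' (hc v ⟨h, hlt⟩)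
          rw [if_pos h]
          omega
        · rw [if_neg h]
      rw [hw, mul_zero]
    omega
  exact hle hiter
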